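/- arXiv:2005.12817 — 7 statements merged into one kernel-verified Lean document; each statement's English description precedes it below -/
import Mathlib

section
/- Let G be a multigraph and O an orientation of G. Then for every edge e of G, exactly one of the following holds: (i) there exists a subset S of the vertex set V such that e has exactly one endpoint in S and the cut of S is directed towards S; (ii) e is contained in a directed cycle of O. In particular, e is contained in a directed cut or in a directed cycle, but not both. -/
/-!
An edge `e` lies on a directed cycle iff the tail of `e` is reachable from its head. On the
other hand, the cut of `S` is directed towards `S` iff `S` is closed under moving forward
along edges. So if the tail of `e` is reachable from its head, no such `S` separates them;
otherwise the set of vertices reachable from the head of `e` is such an `S` with `e` in its cut.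
-/

open Finset

/-- A multigraph on vertex type `V` with edge type `E`: each edge `e` joins the
(possibly equal) vertices `fst e` and `snd e` (loops and multiple edges allowed). -/
structure Multigraph (V E : Type) where
  fst : E → V
  snd : E → V

/-- An orientation of a multigraph: each edge gets a tail and a head, which are its
two endpoints (in one of the two possible orders). -/
structure GraphOrientation {V E : Type} (G : Multigraph V E) where
  tail : E → V
  head : E → V
  compat : ∀ e, (tail e = G.fst e ∧ head e = G.snd e) ∨ (tail e = G.snd e ∧ head e = G.fst e)

variable {V E : Type} [Fintype V] [Fintype E] [DecidableEq V] [DecidableEq E]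

namespace Multigraph

/-- `E(S)`: the set of edges with both endpoints in `S`. -/
def edgesIn (G : Multigraph V E) (S : Finset V) : Finset E :=
  univ.filter fun e => G.fst e ∈ S ∧ G.snd e ∈ S

/-- Membership in the cut of `S`: exactly one endpoint of `e` lies in `S`. -/
def InCut (G : Multigraph V E) (S : Finset V) (e : E) : Prop :=
  (G.fst e ∈ S ∧ G.snd e ∉ S) ∨ (G.fst e ∉ S ∧ G.snd e ∈ S)

instance (G : Multigraph V E) (S : Finset V) : DecidablePred (G.InCut S) := fun e =>
  decidable_of_iff ((G.fst e ∈ S ∧ G.snd e ∉ S) ∨ (G.fst e ∉ S ∧ G.snd e ∈ S)) Iff.rfl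

/-- `ε(S)`: the number of edges with exactly one endpoint in `S`. -/
def cutCard (G : Multigraph V E) (S : Finset V) : ℕ :=
  (univ.filter fun e => G.InCut S e).card

/-- The genus `g(S) = |E(S)| - |S| + 1 + Σ_{v ∈ S} g_v` of a subset of vertices,
for the vertex weight function `w`. -/
def genusOf (G : Multigraph V E) (w : V → ℕ) (S : Finset V) : ℤ :=
  ((G.edgesIn S).card : ℤ) - S.card + 1 + ∑ v ∈ S, (w v : ℤ)

/-- The genus of the weighted multigraph. -/
def genus (G : Multigraph V E) (w : V → ℕ) : ℤ := G.genusOf w univ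

/-- The valence of a vertex: the number of edge-ends at it (a loop counts twice). -/
def valence (G : Multigraph V E) (v : V) : ℕ :=
  (univ.filter fun e => G.fst e = v).card + (univ.filter fun e => G.snd e = v).card

/-- Adjacency via some edge. -/
def Adj (G : Multigraph V E) (a b : V) : Prop :=
  ∃ e, (G.fst e = a ∧ G.snd e = b) ∨ (G.fst e = b ∧ G.snd e = a)

/-- The multigraph is connected: nonempty, and any two vertices are joined by a path. -/
def Connected (G : Multigraph V E) : Prop :=
  Nonempty V ∧ ∀ a b : V, Relation.ReflTransGen G.Adj a b

/-- Adjacency inside the induced subgraph on `S` (via an edge of `E(S)`). -/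
def AdjOn (G : Multigraph V E) (S : Finset V) (a b : V) : Prop :=
  ∃ e, ((G.fst e = a ∧ G.snd e = b) ∨ (G.fst e = b ∧ G.snd e = a)) ∧
    G.fst e ∈ S ∧ G.snd e ∈ S

/-- The induced subgraph on `S` is connected. -/
def ConnectedOn (G : Multigraph V E) (S : Finset V) : Prop :=
  ∀ a ∈ S, ∀ b ∈ S, Relation.ReflTransGen (G.AdjOn S) a b

/-- The weighted multigraph is stable: connected, of genus at least 2, and every
vertex of weight 0 has valence at least 3. -/
def IsStable (G : Multigraph V E) (w : V → ℕ) : Prop :=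
  G.Connected ∧ 2 ≤ G.genus w ∧ ∀ v, w v = 0 → 3 ≤ G.valence v

/-- A multidegree `d : V → ℤ` of total degree `δ = ∑ v, d v` is semistable if for every
nonempty `S ⊆ V`:
`(2g-2)(g(S)-1) + (δ-g+1)(2g(S)-2+ε(S)) ≤ (2g-2) Σ_{v ∈ S} d v`. -/
def Semistable (G : Multigraph V E) (w : V → ℕ) (d : V → ℤ) : Prop :=
  ∀ S : Finset V, S.Nonempty →
    (2 * G.genus w - 2) * (G.genusOf w S - 1) +
      ((∑ v, d v) - G.genus w + 1) * (2 * G.genusOf w S - 2 + (G.cutCard S : ℤ)) ≤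
    (2 * G.genus w - 2) * ∑ v ∈ S, d v

/-- A multidegree is stable if it is semistable and the semistability inequality is
strict for every nonempty proper subset of vertices. -/
def StableDeg (G : Multigraph V E) (w : V → ℕ) (d : V → ℤ) : Prop :=
  G.Semistable w d ∧ ∀ S : Finset V, S.Nonempty → S ≠ univ →
    (2 * G.genus w - 2) * (G.genusOf w S - 1) +
      ((∑ v, d v) - G.genus w + 1) * (2 * G.genusOf w S - 2 + (G.cutCard S : ℤ)) <
    (2 * G.genus w - 2) * ∑ v ∈ S, d v

/-- A multidegree is effective if it is nonnegative at every vertex. -/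
def Effective (d : V → ℤ) : Prop := ∀ v, 0 ≤ d v

end Multigraph

namespace GraphOrientation

variable {G : Multigraph V E}

/-- The indegree of a vertex: the number of edges with head `v`. -/
def indeg (O : GraphOrientation G) (v : V) : ℕ :=
  (univ.filter fun e => O.head e = v).card

/-- The multidegree `d_O` associated to an orientation: `d_O(v) = g_v - 1 + indeg_O(v)`. -/
def multidegree (O : GraphOrientation G) (w : V → ℕ) : V → ℤ :=
  fun v => (w v : ℤ) - 1 + (O.indeg v : ℤ)

/-- The edge `e₀` lies on a directed cycle of `O`: there are `k ≥ 1` distinct vertices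
`vs` and distinct edges `es`, with `es i` directed from `vs i` to `vs (i+1)`,
one of the edges being `e₀`. -/
def EdgeInCycle (O : GraphOrientation G) (e₀ : E) : Prop :=
  ∃ (k : ℕ) (vs : Fin (k + 1) → V) (es : Fin (k + 1) → E),
    Function.Injective vs ∧ Function.Injective es ∧ (∃ i, es i = e₀) ∧
    ∀ i, O.tail (es i) = vs i ∧ O.head (es i) = vs (i + 1)

/-- The orientation contains a directed cycle. -/
def HasDirectedCycle (O : GraphOrientation G) : Prop :=
  ∃ (k : ℕ) (vs : Fin (k + 1) → V) (es : Fin (k + 1) → E),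
    Function.Injective vs ∧ Function.Injective es ∧
    ∀ i, O.tail (es i) = vs i ∧ O.head (es i) = vs (i + 1)

/-- The orientation is acyclic: it contains no directed cycle. -/
def Acyclic (O : GraphOrientation G) : Prop := ¬ O.HasDirectedCycle

/-- The orientation is totally cyclic: every edge lies on a directed cycle. -/
def TotallyCyclic (O : GraphOrientation G) : Prop := ∀ e, O.EdgeInCycle e

/-- The cut of `S` is directed towards `S`: every edge of the cut has its head in `S`. -/
def CutTowards (O : GraphOrientation G) (S : Finset V) : Prop :=
  ∀ e, G.InCut S e → O.head e ∈ S

/-- The cut of `S` is directed away from `S`: every edge of the cut has its tail in `S`. -/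
def CutAway (O : GraphOrientation G) (S : Finset V) : Prop :=
  ∀ e, G.InCut S e → O.tail e ∈ S

end GraphOrientation

namespace Relation

variable {α : Type*} {r : α → α → Prop}

theorem ReflTransGen.exists_injective_path {a b : α} (h : ReflTransGen r a b) :
    ∃ (n : ℕ) (p : Fin (n + 1) → α), p 0 = a ∧ p (Fin.last n) = b ∧ p.Injective ∧
      ∀ i : Fin n, r (p i.castSucc) (p i.succ) := by
  induction h using ReflTransGen.head_induction_on with
  | refl => exact ⟨0, fun _ => b, rfl, rfl, fun _ _ _ => Fin.ext (by omega), Fin.elim0⟩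
  | @head a c hac _ ih =>
    obtain ⟨n, p, hp0, hpn, hinj, hstep⟩ := ih
    by_cases ha : ∃ i, p i = a
    · -- `a` already occurs on the path: shortcut to that occurrence
      obtain ⟨i, rfl⟩ := ha
      refine ⟨n - i, fun j => p ⟨i + j, by omega⟩, by simp, ?_, ?_, fun j => ?_⟩
      · rw [← hpn]
        exact congrArg p (Fin.ext (by simp; omega))
      · intro j₁ j₂ hj
        have := congrArg Fin.val (hinj hj)
        exact Fin.ext (by simpa using this)
      · convert hstep ⟨i + j, by omega⟩ using 2 <;> exact Fin.ext (by simp [Nat.add_assoc])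
    · push Not at ha
      refine ⟨n + 1, Fin.cons a p, rfl, by rwa [← Fin.succ_last, Fin.cons_succ],
        Fin.cons_injective_iff.2 ⟨fun ⟨i, hi⟩ => ha i hi, hinj⟩, fun i => ?_⟩
      induction i using Fin.cases with
      | zero => simpa [hp0] using hac
      | succ j => simpa [← Fin.succ_castSucc] using hstep j

theorem reflTransGen_of_cyclic {n : ℕ} {p : Fin (n + 1) → α} (hp : ∀ i, r (p i) (p (i + 1)))
    (i j : Fin (n + 1)) : ReflTransGen r (p i) (p j) := by
  have from_zero : ∀ j, ReflTransGen r (p 0) (p j) := by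
    refine Fin.induction .refl fun j hj => hj.tail ?_
    simpa [Fin.coeSucc_eq_succ] using hp j.castSucc
  have to_zero : ∀ i, ReflTransGen r (p i) (p 0) := by
    refine Fin.reverseInduction (.single ?_) fun i hi => hi.head ?_
    · simpa using hp (Fin.last n)
    · simpa [Fin.coeSucc_eq_succ] using hp i.castSucc
  exact (to_zero i).trans (from_zero j)

end Relation

namespace GraphOrientation

open Relation

variable {V E : Type} {G : Multigraph V E} (O : GraphOrientation G)

def Adj (x y : V) : Prop := ∃ e, O.tail e = x ∧ O.head e = y

theorem inCut_iff {S : Finset V} {e : E} :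
    G.InCut S e ↔ (O.tail e ∈ S ∧ O.head e ∉ S) ∨ (O.tail e ∉ S ∧ O.head e ∈ S) := by
  unfold Multigraph.InCut
  rcases O.compat e with ⟨ht, hh⟩ | ⟨ht, hh⟩ <;> rw [ht, hh]
  tauto

theorem cutTowards_iff {S : Finset V} :
    O.CutTowards S ↔ ∀ x y, O.Adj x y → x ∈ S → y ∈ S := by
  constructor
  · rintro hS _ _ ⟨e, rfl, rfl⟩ hx
    by_contra hy
    exact hy (hS e ((O.inCut_iff).2 (.inl ⟨hx, hy⟩)))
  · intro hS e he
    rcases (O.inCut_iff).1 he with ⟨ht, -⟩ | ⟨-, hh⟩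
    exacts [hS _ _ ⟨e, rfl, rfl⟩ ht, hh]

theorem CutTowards.mem_of_reflTransGen {S : Finset V} (hS : O.CutTowards S) {x y : V}
    (hx : x ∈ S) (hxy : ReflTransGen O.Adj x y) : y ∈ S := by
  induction hxy with
  | refl => exact hx
  | tail _ hyz hy => exact (O.cutTowards_iff.1 hS) _ _ hyz hy

theorem exists_inCut_cutTowards_iff [Fintype V] (e : E) :
    (∃ S : Finset V, G.InCut S e ∧ O.CutTowards S) ↔
      ¬ ReflTransGen O.Adj (O.head e) (O.tail e) := by
  classical
  constructor
  · rintro ⟨S, he, hS⟩ hreach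
    have hhead : O.head e ∈ S := hS e he
    have htail : O.tail e ∉ S := by
      rcases (O.inCut_iff).1 he with ⟨-, hh⟩ | ⟨ht, -⟩
      exacts [absurd hhead hh, ht]
    exact htail (hS.mem_of_reflTransGen O hhead hreach)
  · intro hreach
    refine ⟨{v | ReflTransGen O.Adj (O.head e) v}.toFinset, ?_, ?_⟩
    · simpa [O.inCut_iff] using .inr ⟨hreach, ReflTransGen.refl⟩
    · rw [cutTowards_iff]
      simpa using fun x y hxy hx => ReflTransGen.tail hx hxy

theorem edgeInCycle_iff_reflTransGen (e : E) :
    O.EdgeInCycle e ↔ ReflTransGen O.Adj (O.head e) (O.tail e) := by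
  constructor
  · rintro ⟨k, vs, es, -, -, ⟨j, rfl⟩, hes⟩
    rw [(hes j).1, (hes j).2]
    exact reflTransGen_of_cyclic (fun i => ⟨es i, hes i⟩) _ _
  · intro hreach
    obtain ⟨n, vs, hvs0, hvsn, hinj, hadj⟩ := hreach.exists_injective_path
    choose es hes using hadj
    let cyc : Fin (n + 1) → E := Fin.snoc es e
    have hcyc : ∀ i, O.tail (cyc i) = vs i ∧ O.head (cyc i) = vs (i + 1) := by
      refine Fin.lastCases ?_ fun i => ?_
      · simp [cyc, hvsn, hvs0]
      · simpa [cyc, Fin.coeSucc_eq_succ] using hes i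
    have htail : O.tail ∘ cyc = vs := funext fun i => (hcyc i).1
    exact ⟨n, vs, cyc, hinj, (htail ▸ hinj).of_comp, ⟨Fin.last n, Fin.snoc_last _ _⟩, hcyc⟩

end GraphOrientation

/-- For every edge `e` of an oriented multigraph, exactly one of the
following holds: (i) there is a vertex subset `S` such that `e` lies in the cut of `S`
and the cut of `S` is directed towards `S`; (ii) `e` lies on a directed cycle. -/
theorem edge_in_directed_cut_xor_directed_cycle
    (G : Multigraph V E) (O : GraphOrientation G) (e : E) :
    Xor' (∃ S : Finset V, G.InCut S e ∧ O.CutTowards S) (O.EdgeInCycle e) := by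
  rw [O.edgeInCycle_iff_reflTransGen]
  exact xor_iff_iff_not.2 (O.exists_inCut_cutTowards_iff e)
end

section
/- Let G be a stable weighted multigraph of genus g, and let K be the canonical multidegree defined by K_v = 2g_v − 2 + val(v), where val(v) is the valence of v; K has total degree 2g − 2. Then a multidegree d on G is semistable if and only if the residual multidegree K − d is semistable, and d is stable if and only if K − d is stable. -/
open Finset

variable {V E : Type} [Fintype V] [Fintype E] [DecidableEq V] [DecidableEq E]

section Aux

lemma sum_valence (G : Multigraph V E) (S : Finset V) :
    ∑ v ∈ S, G.valence v = 2 * (G.edgesIn S).card + G.cutCard S := by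
  classical
  unfold Multigraph.valence Multigraph.edgesIn Multigraph.cutCard
  simp only [Finset.card_filter, Finset.sum_add_distrib]
  rw [Finset.sum_comm (s := S) (t := univ), Finset.sum_comm (s := S) (t := univ),
      Finset.mul_sum, ← Finset.sum_add_distrib, ← Finset.sum_add_distrib]
  refine Finset.sum_congr rfl fun e _ => ?_
  rw [Finset.sum_ite_eq S (G.fst e) fun _ => 1, Finset.sum_ite_eq S (G.snd e) fun _ => 1]
  by_cases h1 : G.fst e ∈ S <;> by_cases h2 : G.snd e ∈ S <;>
    simp [Multigraph.InCut, h1, h2]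

lemma edges_partition (G : Multigraph V E) (S : Finset V) :
    (G.edgesIn S).card + (G.edgesIn Sᶜ).card + G.cutCard S = Fintype.card E := by
  classical
  unfold Multigraph.edgesIn Multigraph.cutCard
  simp only [Finset.card_filter, ← Finset.sum_add_distrib]
  rw [← Finset.card_univ, Finset.card_eq_sum_ones]
  refine Finset.sum_congr rfl fun e _ => ?_
  by_cases h1 : G.fst e ∈ S <;> by_cases h2 : G.snd e ∈ S <;>
    simp [Multigraph.InCut, h1, h2]

lemma cut_compl (G : Multigraph V E) (S : Finset V) :
    G.cutCard Sᶜ = G.cutCard S := by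
  unfold Multigraph.cutCard
  congr 1
  apply Finset.filter_congr
  intro e _
  simp only [Multigraph.InCut, Finset.mem_compl]
  tauto

end Aux
section Aux2
set_option linter.unusedSectionVars false

lemma cutCard_univ (G : Multigraph V E) : G.cutCard (univ : Finset V) = 0 := by
  simp [Multigraph.cutCard, Multigraph.InCut]

lemma Ksum (G : Multigraph V E) (w : V → ℕ) (S : Finset V) :
    ∑ v ∈ S, (2 * (w v : ℤ) - 2 + (G.valence v : ℤ))
      = 2 * G.genusOf w S - 2 + (G.cutCard S : ℤ) := by
  have hv : (∑ v ∈ S, (G.valence v : ℤ))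
      = 2 * ((G.edgesIn S).card : ℤ) + (G.cutCard S : ℤ) := by
    exact_mod_cast congrArg (fun n : ℕ => (n : ℤ)) (sum_valence G S)
  unfold Multigraph.genusOf
  simp only [Finset.sum_add_distrib, Finset.sum_sub_distrib, Finset.sum_const,
    nsmul_eq_mul, ← Finset.mul_sum, hv]
  ring

lemma Ktot (G : Multigraph V E) (w : V → ℕ) :
    ∑ v : V, (2 * (w v : ℤ) - 2 + (G.valence v : ℤ)) = 2 * G.genus w - 2 := by
  have := Ksum G w (univ : Finset V)
  rwa [cutCard_univ, Nat.cast_zero, add_zero] at this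

lemma genus_compl (G : Multigraph V E) (w : V → ℕ) (S : Finset V) :
    G.genusOf w Sᶜ = G.genus w + 1 - (G.cutCard S : ℤ) - G.genusOf w S := by
  have hE : ((G.edgesIn S).card : ℤ) + ((G.edgesIn Sᶜ).card : ℤ) + (G.cutCard S : ℤ)
      = (Fintype.card E : ℤ) := by exact_mod_cast edges_partition G S
  have hle := Finset.card_le_univ S
  have hV : ((Sᶜ : Finset V).card : ℤ) = (Fintype.card V : ℤ) - S.card := by
    rw [Finset.card_compl]; omega
  have hw : ∑ v ∈ Sᶜ, (w v : ℤ) = (∑ v, (w v : ℤ)) - ∑ v ∈ S, (w v : ℤ) := by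
    rw [← Finset.sum_add_sum_compl S fun v => (w v : ℤ)]; ring
  have hEu : (G.edgesIn (univ : Finset V)).card = Fintype.card E := by
    simp [Multigraph.edgesIn]
  unfold Multigraph.genus Multigraph.genusOf
  rw [hEu, hw, hV]
  simp only [Finset.card_univ]
  linarith

lemma semi_resid (G : Multigraph V E) (w : V → ℕ) (d : V → ℤ)
    (h : G.Semistable w d) :
    G.Semistable w (fun v => (2 * (w v : ℤ) - 2 + (G.valence v : ℤ)) - d v) := by
  intro S hS
  simp only []
  have hsum1 : ∑ v : V, (2 * (w v : ℤ) - 2 + (G.valence v : ℤ) - d v)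
      = (2 * G.genus w - 2) - ∑ v, d v := by
    rw [Finset.sum_sub_distrib, Ktot]
  have hsum2 : ∑ v ∈ S, (2 * (w v : ℤ) - 2 + (G.valence v : ℤ) - d v)
      = (2 * G.genusOf w S - 2 + (G.cutCard S : ℤ)) - ∑ v ∈ S, d v := by
    rw [Finset.sum_sub_distrib, Ksum]
  rw [hsum1, hsum2]
  by_cases hSu : S = univ
  · subst hSu
    rw [cutCard_univ]
    have hg : G.genusOf w univ = G.genus w := rfl
    rw [hg]
    apply le_of_eq
    push_cast
    ring
  · have hSc : (Sᶜ : Finset V).Nonempty := by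
      obtain ⟨v, -, hv⟩ := Finset.exists_of_ssubset (Finset.ssubset_univ_iff.mpr hSu)
      exact ⟨v, Finset.mem_compl.mpr hv⟩
    have hh := h Sᶜ hSc
    rw [genus_compl G w S, cut_compl G S] at hh
    have hsc : ∑ v ∈ Sᶜ, d v = (∑ v, d v) - ∑ v ∈ S, d v := by
      rw [← Finset.sum_add_sum_compl S d]; ring
    rw [hsc] at hh
    set g := G.genus w
    set gS := G.genusOf w S
    set e := (G.cutCard S : ℤ)
    set δ := ∑ v, d v
    set sS := ∑ v ∈ S, d v
    nlinarith [hh, sq_nonneg (g : ℤ)]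

end Aux2
section Aux3
set_option linter.unusedSectionVars false

lemma stab_resid (G : Multigraph V E) (w : V → ℕ) (d : V → ℤ)
    (h : G.StableDeg w d) :
    G.StableDeg w (fun v => (2 * (w v : ℤ) - 2 + (G.valence v : ℤ)) - d v) := by
  refine ⟨semi_resid G w d h.1, fun S hS hSu => ?_⟩
  simp only []
  have hsum1 : ∑ v : V, (2 * (w v : ℤ) - 2 + (G.valence v : ℤ) - d v)
      = (2 * G.genus w - 2) - ∑ v, d v := by
    rw [Finset.sum_sub_distrib, Ktot]
  have hsum2 : ∑ v ∈ S, (2 * (w v : ℤ) - 2 + (G.valence v : ℤ) - d v)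
      = (2 * G.genusOf w S - 2 + (G.cutCard S : ℤ)) - ∑ v ∈ S, d v := by
    rw [Finset.sum_sub_distrib, Ksum]
  rw [hsum1, hsum2]
  have hSc : (Sᶜ : Finset V).Nonempty := by
    obtain ⟨v, -, hv⟩ := Finset.exists_of_ssubset (Finset.ssubset_univ_iff.mpr hSu)
    exact ⟨v, Finset.mem_compl.mpr hv⟩
  have hScu : (Sᶜ : Finset V) ≠ univ := by
    obtain ⟨v, hv⟩ := hS
    intro hc
    exact (Finset.mem_compl.mp (hc ▸ Finset.mem_univ v)) hv
  have hh := h.2 Sᶜ hSc hScu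
  rw [genus_compl G w S, cut_compl G S] at hh
  have hsc : ∑ v ∈ Sᶜ, d v = (∑ v, d v) - ∑ v ∈ S, d v := by
    rw [← Finset.sum_add_sum_compl S d]; ring
  rw [hsc] at hh
  set g := G.genus w
  set gS := G.genusOf w S
  set e := (G.cutCard S : ℤ)
  set δ := ∑ v, d v
  set sS := ∑ v ∈ S, d v
  nlinarith [hh]

end Aux3

/-- For a stable weighted multigraph with canonical multidegree
`K v = 2 g_v - 2 + val(v)`, `K` has total degree `2g - 2`, and a multidegree `d`
is semistable (resp. stable) iff its residual `K - d` is semistable (resp. stable). -/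
theorem residual_semistable_and_stable
    (G : Multigraph V E) (w : V → ℕ) (hG : G.IsStable w) (d : V → ℤ) :
    (∑ v : V, (2 * (w v : ℤ) - 2 + (G.valence v : ℤ)) = 2 * G.genus w - 2) ∧
    (G.Semistable w d ↔
      G.Semistable w (fun v => (2 * (w v : ℤ) - 2 + (G.valence v : ℤ)) - d v)) ∧
    (G.StableDeg w d ↔
      G.StableDeg w (fun v => (2 * (w v : ℤ) - 2 + (G.valence v : ℤ)) - d v)) := by
  have hfun : (fun v => (2 * (w v : ℤ) - 2 + (G.valence v : ℤ))
      - ((2 * (w v : ℤ) - 2 + (G.valence v : ℤ)) - d v)) = d := by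
    funext v; ring
  refine ⟨Ktot G w, ⟨semi_resid G w d, fun h => ?_⟩, ⟨stab_resid G w d, fun h => ?_⟩⟩
  · have := semi_resid G w _ h
    rwa [hfun] at this
  · have := stab_resid G w _ h
    rwa [hfun] at this
end

section
/- Let G be a stable weighted multigraph of genus g and let d be a multidegree of total degree g − 1 on G. Then d is semistable if and only if d is orientable, i.e., there exists an orientation O of G with d = d_O. -/
open Finset

variable {V E : Type} [Fintype V] [Fintype E] [DecidableEq V] [DecidableEq E]

/-
Since the total degree is `g - 1`, the second term of the semistability inequality vanishes, and
as `2g - 2 > 0` semistability says `g(S) - 1 ≤ Σ_{v ∈ S} d_v` for every `S`. Writing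
`m_v = d_v - g_v + 1`, this is `|E(S)| ≤ Σ_{v ∈ S} m_v`, while `Σ_V m_v = |E|`. For an orientation,
`m_v = indeg(v)` gives these inequalities at once, since every edge of `E(S)` has its head in `S`.
Conversely, they are exactly Hall's condition for matching each edge to one of the `m_v` slots at
one of its endpoints (Hakimi's theorem); orienting every edge towards its slot gives indegrees at
most `m_v`, hence equal to `m_v` because both sum to `|E|`.
-/

section

omit [DecidableEq E]

namespace GraphOrientation

variable {G : Multigraph V E}

def ofHead (h : E → V) (hh : ∀ e, h e = G.fst e ∨ h e = G.snd e) : GraphOrientation G where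
  head := h
  tail e := if h e = G.fst e then G.snd e else G.fst e
  compat e := by
    by_cases he : h e = G.fst e
    · exact Or.inr ⟨if_pos he, he⟩
    · exact Or.inl ⟨if_neg he, (hh e).resolve_left he⟩

omit [Fintype V] [Fintype E] [DecidableEq V] in
theorem head_eq_fst_or_snd (O : GraphOrientation G) (e : E) :
    O.head e = G.fst e ∨ O.head e = G.snd e :=
  (O.compat e).elim (fun h => Or.inr h.2) (fun h => Or.inl h.2)

theorem sum_indeg (O : GraphOrientation G) : ∑ v, O.indeg v = Fintype.card E :=
  (card_eq_sum_card_fiberwise fun e _ => mem_univ (O.head e)).symm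

omit [Fintype V] in
theorem card_edgesIn_le_sum_indeg (O : GraphOrientation G) (S : Finset V) :
    #(G.edgesIn S) ≤ ∑ v ∈ S, O.indeg v := by
  simp only [indeg, sum_card_fiberwise_eq_card_filter]
  refine card_le_card fun e he => ?_
  simp only [Multigraph.edgesIn, mem_filter, mem_univ, true_and] at he ⊢
  rcases O.head_eq_fst_or_snd e with h | h <;> rw [h]
  exacts [he.1, he.2]

end GraphOrientation

namespace Multigraph

variable (G : Multigraph V E) {w : V → ℕ} {d : V → ℤ}

theorem edgesIn_univ : G.edgesIn univ = univ := by
  simp [edgesIn]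

omit [Fintype V] in
theorem sum_sub_weight_add_one (S : Finset V) :
    ∑ v ∈ S, (d v - w v + 1) = ∑ v ∈ S, d v - (G.genusOf w S - 1) + #(G.edgesIn S) := by
  simp only [genusOf, sum_add_distrib, sum_sub_distrib, sum_const, nsmul_eq_mul, mul_one]
  ring

theorem semistable_iff_genusOf_sub_one_le (hg : 1 < G.genus w)
    (hd : ∑ v, d v = G.genus w - 1) :
    G.Semistable w d ↔ ∀ S : Finset V, G.genusOf w S - 1 ≤ ∑ v ∈ S, d v := by
  have hcoef : (∑ v, d v) - G.genus w + 1 = 0 := by rw [hd]; ring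
  simp only [Semistable, hcoef, zero_mul, add_zero,
    mul_le_mul_iff_right₀ (show 0 < 2 * G.genus w - 2 by linarith)]
  refine ⟨fun h S => ?_, fun h S _ => h S⟩
  rcases S.eq_empty_or_nonempty with rfl | hS
  · simp [genusOf, edgesIn]
  · exact h S hS

omit [Fintype V] in
theorem genusOf_sub_one_le_sum_multidegree (O : GraphOrientation G) (S : Finset V) :
    G.genusOf w S - 1 ≤ ∑ v ∈ S, O.multidegree w v := by
  have hsum : ∑ v ∈ S, (O.indeg v : ℤ) =
      ∑ v ∈ S, O.multidegree w v - (G.genusOf w S - 1) + #(G.edgesIn S) := by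
    rw [← G.sum_sub_weight_add_one]
    exact sum_congr rfl fun v _ => by simp only [GraphOrientation.multidegree]; ring
  have hle : (#(G.edgesIn S) : ℤ) ≤ ∑ v ∈ S, (O.indeg v : ℤ) := by
    exact_mod_cast O.card_edgesIn_le_sum_indeg S
  linarith

omit [Fintype V] in
theorem exists_orientation_indeg_le (m : V → ℕ)
    (hm : ∀ S : Finset V, #(G.edgesIn S) ≤ ∑ v ∈ S, m v) :
    ∃ O : GraphOrientation G, ∀ v, O.indeg v ≤ m v := by
  let slots (e : E) : Finset (Σ _ : V, ℕ) := ({G.fst e, G.snd e} : Finset V).sigma (range ∘ m)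
  have hall : ∀ A : Finset E, #A ≤ #(A.biUnion slots) := by
    intro A
    let S := A.biUnion fun e => {G.fst e, G.snd e}
    have hA : A ⊆ G.edgesIn S := fun e he => by
      simp only [edgesIn, mem_filter, mem_univ, true_and, S, mem_biUnion]
      exact ⟨⟨e, he, by simp⟩, ⟨e, he, by simp⟩⟩
    have hslots : A.biUnion slots = S.sigma (range ∘ m) := by
      ext x
      simp only [slots, S, mem_biUnion, mem_sigma]
      tauto
    calc #A ≤ #(G.edgesIn S) := card_le_card hA
      _ ≤ ∑ v ∈ S, m v := hm S
      _ = #(A.biUnion slots) := by simp [hslots, card_sigma]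
  obtain ⟨f, hf, hfslot⟩ := (all_card_le_biUnion_card_iff_exists_injective slots).mp hall
  simp only [slots, mem_sigma, mem_insert, mem_singleton, Function.comp_apply, mem_range]
    at hfslot
  refine ⟨GraphOrientation.ofHead (fun e => (f e).1) fun e => (hfslot e).1, fun v => ?_⟩
  calc GraphOrientation.indeg _ v ≤ #(range (m v)) := by
        refine card_le_card_of_injOn (fun e => (f e).2) (fun e he => ?_) fun a ha b hb hab => ?_
        · have he : (f e).1 = v := (mem_filter.mp he).2
          exact mem_range.mpr (he ▸ (hfslot e).2)
        · have ha : (f a).1 = v := (mem_filter.mp ha).2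
          have hb : (f b).1 = v := (mem_filter.mp hb).2
          exact hf (Sigma.ext (ha.trans hb.symm) (heq_of_eq hab))
    _ = m v := card_range _

theorem exists_orientation_indeg_eq (m : V → ℕ) (hsum : ∑ v, m v = Fintype.card E)
    (hm : ∀ S : Finset V, #(G.edgesIn S) ≤ ∑ v ∈ S, m v) :
    ∃ O : GraphOrientation G, ∀ v, O.indeg v = m v := by
  obtain ⟨O, hO⟩ := G.exists_orientation_indeg_le m hm
  exact ⟨O, fun v => (sum_eq_sum_iff_of_le fun v _ => hO v).mp
    (O.sum_indeg.trans hsum.symm) v (mem_univ v)⟩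

theorem exists_orientation_of_genusOf_sub_one_le (hd : ∑ v, d v = G.genus w - 1)
    (h : ∀ S : Finset V, G.genusOf w S - 1 ≤ ∑ v ∈ S, d v) :
    ∃ O : GraphOrientation G, d = O.multidegree w := by
  have hm : ∀ S, (#(G.edgesIn S) : ℤ) ≤ ∑ v ∈ S, (d v - w v + 1) := fun S => by
    rw [G.sum_sub_weight_add_one]
    linarith [h S]
  have hnonneg : ∀ v, 0 ≤ d v - w v + 1 := fun v => by
    simpa using (hm {v}).trans' (Nat.cast_nonneg _)
  have hcast : ∀ S : Finset V,
      ∑ v ∈ S, ((d v - w v + 1).toNat : ℤ) = ∑ v ∈ S, (d v - w v + 1) := fun S =>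
    sum_congr rfl fun v _ => Int.toNat_of_nonneg (hnonneg v)
  obtain ⟨O, hO⟩ := G.exists_orientation_indeg_eq (fun v => (d v - w v + 1).toNat)
    (by
      zify
      rw [hcast, G.sum_sub_weight_add_one, hd, genus, edgesIn_univ, card_univ]
      ring)
    (fun S => by zify; rw [hcast]; exact hm S)
  refine ⟨O, funext fun v => ?_⟩
  simp only [GraphOrientation.multidegree, hO, Int.toNat_of_nonneg (hnonneg v)]
  ring

end Multigraph

end

/-- A multidegree of total degree `g - 1` on a stable weighted multigraph
is semistable iff it is orientable, i.e., `d = d_O` for some orientation `O`. -/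
theorem semistable_degree_g_sub_one_iff_orientable
    (G : Multigraph V E) (w : V → ℕ) (hG : G.IsStable w) (d : V → ℤ)
    (hd : ∑ v, d v = G.genus w - 1) :
    G.Semistable w d ↔ ∃ O : GraphOrientation G, d = O.multidegree w := by
  rw [G.semistable_iff_genusOf_sub_one_le (by linarith [hG.2.1]) hd]
  exact ⟨G.exists_orientation_of_genusOf_sub_one_le hd,
    fun ⟨O, hO⟩ S => hO ▸ G.genusOf_sub_one_le_sum_multidegree O S⟩
end

section
/- Let G be a stable weighted multigraph of genus g and let d be a semistable multidegree of total degree g on G. Then for every vertex v ∈ V there exists an orientation O of G such that d = d_O + v and there is no nonempty proper subset S ⊊ V with v ∈ S whose cut is directed towards S. -/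
open Finset

variable {V E : Type} [Fintype V] [Fintype E] [DecidableEq V] [DecidableEq E]

section AuxStatement9

variable {G : Multigraph V E} {w : V → ℕ}

lemma aux_sum_fiber (φ : E → V) (S : Finset V) :
    ∑ u ∈ S, (univ.filter fun e => φ e = u).card
      = (univ.filter fun e => φ e ∈ S).card := by
  simp only [Finset.card_filter]
  rw [Finset.sum_comm]
  refine Finset.sum_congr rfl fun e _ => ?_
  simp [Finset.sum_ite_eq]

lemma aux_sum_valence (G : Multigraph V E) (S : Finset V) :
    ∑ u ∈ S, G.valence u = 2 * (G.edgesIn S).card + G.cutCard S := by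
  unfold Multigraph.valence Multigraph.edgesIn Multigraph.cutCard
  rw [Finset.sum_add_distrib, aux_sum_fiber, aux_sum_fiber]
  simp only [Finset.card_filter]
  rw [Finset.mul_sum, ← Finset.sum_add_distrib, ← Finset.sum_add_distrib]
  refine Finset.sum_congr rfl fun e _ => ?_
  by_cases h1 : G.fst e ∈ S <;> by_cases h2 : G.snd e ∈ S <;>
    simp [Multigraph.InCut, h1, h2]

lemma aux_stable_subset (hG : G.IsStable w)
    (S : Finset V) (hne : S.Nonempty) (hproper : S ≠ univ) :
    1 ≤ 2 * G.genusOf w S - 2 + (G.cutCard S : ℤ) := by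
  have hvalZ : (∑ u ∈ S, (G.valence u : ℤ))
      = 2 * ((G.edgesIn S).card : ℤ) + (G.cutCard S : ℤ) := by
    exact_mod_cast congrArg (Nat.cast (R := ℤ)) (aux_sum_valence G S)
  have hid : 2 * G.genusOf w S - 2 + (G.cutCard S : ℤ)
      = ∑ u ∈ S, ((G.valence u : ℤ) + 2 * (w u : ℤ) - 2) := by
    unfold Multigraph.genusOf
    rw [Finset.sum_sub_distrib, Finset.sum_add_distrib, Finset.sum_const,
      nsmul_eq_mul]
    rw [← Finset.mul_sum]
    linear_combination -hvalZ
  obtain ⟨u₀, hu₀⟩ := hne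
  obtain ⟨x, hx⟩ : ∃ x, x ∉ S := by
    by_contra h
    push_neg at h
    exact hproper (Finset.eq_univ_iff_forall.mpr h)
  have hval1 : 1 ≤ G.valence u₀ := by
    have hconn := hG.1.2 u₀ x
    rcases Relation.ReflTransGen.cases_head hconn with h | ⟨y, ⟨e, he⟩, _⟩
    · exact absurd (h ▸ hu₀) hx
    · unfold Multigraph.valence
      rcases he with ⟨h1, _⟩ | ⟨_, h2⟩
      · have he1 : e ∈ univ.filter fun e => G.fst e = u₀ := by simp [h1]
        have := Finset.card_pos.mpr ⟨e, he1⟩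
        omega
      · have he1 : e ∈ univ.filter fun e => G.snd e = u₀ := by simp [h2]
        have := Finset.card_pos.mpr ⟨e, he1⟩
        omega
  rw [hid]
  have hterm : ∀ u ∈ S, (0:ℤ) ≤ (G.valence u : ℤ) + 2 * (w u : ℤ) - 2 := by
    intro u _
    rcases Nat.eq_zero_or_pos (w u) with h | h
    · have := hG.2.2 u h
      omega
    · omega
  have h1 : (1:ℤ) ≤ (G.valence u₀ : ℤ) + 2 * (w u₀ : ℤ) - 2 := by
    rcases Nat.eq_zero_or_pos (w u₀) with h | h
    · have := hG.2.2 u₀ h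
      omega
    · omega
  exact h1.trans (Finset.single_le_sum hterm hu₀)

end AuxStatement9

/-- If `d` is a semistable multidegree of total degree `g` on a stable
weighted multigraph, then for every vertex `v` there is an orientation `O` with
`d = d_O + v` and no nonempty proper subset `S ⊊ V` with `v ∈ S` whose cut is
directed towards `S`. -/
theorem semistable_degree_g_orientation_for_every_vertex
    (G : Multigraph V E) (w : V → ℕ) (hG : G.IsStable w) (d : V → ℤ)
    (hd : ∑ v, d v = G.genus w) (hss : G.Semistable w d) (v : V) :
    ∃ O : GraphOrientation G,
      d = (fun u => O.multidegree w u + if u = v then 1 else 0) ∧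
      ¬ ∃ S : Finset V, S.Nonempty ∧ S ≠ univ ∧ v ∈ S ∧ O.CutTowards S := by
  classical
  -- Step 1: key inequalities from semistability
  have key : ∀ S : Finset V, S.Nonempty → S ≠ univ → G.genusOf w S ≤ ∑ u ∈ S, d u := by
    intro S hne hproper
    have h := hss S hne
    rw [hd] at h
    have hone : G.genus w - G.genus w + 1 = (1:ℤ) := by ring
    rw [hone, one_mul] at h
    have hX := aux_stable_subset hG S hne hproper
    have hg2 : (2:ℤ) ≤ G.genus w := hG.2.1
    have h2 : (2 * G.genus w - 2) * (G.genusOf w S - 1)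
        < (2 * G.genus w - 2) * (∑ u ∈ S, d u) := by linarith
    have h3 : G.genusOf w S - 1 < ∑ u ∈ S, d u :=
      lt_of_mul_lt_mul_left h2 (by linarith)
    have h4 := Int.add_one_le_iff.mpr h3
    linarith
  have key' : ∀ S : Finset V, S.Nonempty →
      G.genusOf w S - 1 + (if v ∈ S then 1 else 0) ≤ ∑ u ∈ S, d u := by
    intro S hne
    by_cases hS : S = univ
    · subst hS
      rw [if_pos (Finset.mem_univ v)]
      unfold Multigraph.genus at hd
      linarith [hd]
    · have := key S hne hS
      split_ifs <;> linarith
  -- Step 2: the target indegree function t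
  have hSing : ∀ u : V, 0 ≤ d u + 1 - (w u : ℤ) - (if u = v then 1 else 0) := by
    intro u
    have h := key' {u} (Finset.singleton_nonempty u)
    rw [Finset.sum_singleton] at h
    have hg : G.genusOf w {u} = ((G.edgesIn {u}).card : ℤ) + (w u : ℤ) := by
      unfold Multigraph.genusOf
      rw [Finset.sum_singleton, Finset.card_singleton]
      push_cast
      ring
    have hif : (if v ∈ ({u} : Finset V) then (1:ℤ) else 0) = (if u = v then 1 else 0) := by
      simp [Finset.mem_singleton, eq_comm]
    rw [hg, hif] at h
    have h0 : (0:ℤ) ≤ ((G.edgesIn {u}).card : ℤ) := Int.natCast_nonneg _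
    linarith
  set t : V → ℕ := fun u => (d u + 1 - (w u : ℤ) - (if u = v then 1 else 0)).toNat with ht_def
  have ht : ∀ u, (t u : ℤ) = d u + 1 - (w u : ℤ) - (if u = v then 1 else 0) :=
    fun u => Int.toNat_of_nonneg (hSing u)
  have htsum : ∀ S : Finset V, ∑ u ∈ S, (t u : ℤ)
      = (∑ u ∈ S, d u) + S.card - (∑ u ∈ S, (w u : ℤ)) - (if v ∈ S then 1 else 0) := by
    intro S
    rw [Finset.sum_congr rfl fun u _ => ht u]
    rw [Finset.sum_sub_distrib, Finset.sum_sub_distrib, Finset.sum_add_distrib,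
      Finset.sum_const, nsmul_eq_mul, mul_one, Finset.sum_ite_eq']
  have hES : ∀ S : Finset V, (G.edgesIn S).card ≤ ∑ u ∈ S, t u := by
    intro S
    rcases S.eq_empty_or_nonempty with rfl | hne
    · simp [Multigraph.edgesIn]
    · have h := key' S hne
      have h2 := htsum S
      unfold Multigraph.genusOf at h
      have : ((G.edgesIn S).card : ℤ) ≤ ∑ u ∈ S, (t u : ℤ) := by linarith
      exact_mod_cast this
  -- Step 3: Hall's theorem gives an injective assignment of heads
  have hslots : ∀ S : Finset V,
      (univ.filter fun b : (u : V) × Fin (t u) => b.1 ∈ S).card = ∑ u ∈ S, t u := by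
    intro S
    have h : (univ.filter fun b : (u : V) × Fin (t u) => b.1 ∈ S)
        = S.sigma fun u => (univ : Finset (Fin (t u))) := by
      ext b
      simp [Finset.mem_sigma]
    rw [h, Finset.card_sigma]
    simp
  set r : E → Finset ((u : V) × Fin (t u)) :=
    fun e => univ.filter fun b => b.1 = G.fst e ∨ b.1 = G.snd e with hr_def
  have hall : ∀ A : Finset E, A.card ≤ (A.biUnion r).card := by
    intro A
    set S : Finset V := A.biUnion fun e => {G.fst e, G.snd e} with hS
    have h1 : A.biUnion r = univ.filter fun b : (u : V) × Fin (t u) => b.1 ∈ S := by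
      ext b
      simp only [Finset.mem_biUnion, Finset.mem_filter, Finset.mem_univ, true_and, hr_def,
        hS, Finset.mem_insert, Finset.mem_singleton]
    have h2 : A ⊆ G.edgesIn S := by
      intro e he
      simp only [Multigraph.edgesIn, Finset.mem_filter, Finset.mem_univ, true_and]
      constructor
      · exact Finset.mem_biUnion.mpr ⟨e, he, by simp⟩
      · exact Finset.mem_biUnion.mpr ⟨e, he, by simp⟩
    calc A.card ≤ (G.edgesIn S).card := Finset.card_le_card h2
      _ ≤ ∑ u ∈ S, t u := hES S
      _ = _ := (hslots S).symm
      _ = (A.biUnion r).card := by rw [h1]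
  obtain ⟨f, hfinj, hfr⟩ := (Finset.all_card_le_biUnion_card_iff_exists_injective r).mp hall
  have hfr' : ∀ e, (f e).1 = G.fst e ∨ (f e).1 = G.snd e := by
    intro e
    have := hfr e
    simpa [hr_def] using this
  -- Step 4: the orientation
  obtain ⟨O, hOh⟩ : ∃ O : GraphOrientation G, O.head = fun e => (f e).1 :=
    ⟨{ tail := fun e => if (f e).1 = G.fst e then G.snd e else G.fst e
       head := fun e => (f e).1
       compat := fun e => by
         by_cases h : (f e).1 = G.fst e
         · exact Or.inr ⟨if_pos h, h⟩
         · exact Or.inl ⟨if_neg h, (hfr' e).resolve_left h⟩ }, rfl⟩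
  have hhead : ∀ e, O.head e = (f e).1 := fun e => congrFun hOh e
  have hheador : ∀ e, O.head e = G.fst e ∨ O.head e = G.snd e := by
    intro e
    rcases O.compat e with ⟨_, hh⟩ | ⟨_, hh⟩
    · exact Or.inr hh
    · exact Or.inl hh
  -- Step 5: indegrees equal t
  have hindeg_le : ∀ u, O.indeg u ≤ t u := by
    intro u
    have hsub : (univ.filter fun e => O.head e = u).image f
        ⊆ univ.filter fun b : (u' : V) × Fin (t u') => b.1 = u := by
      intro b hb
      obtain ⟨e, he, rfl⟩ := Finset.mem_image.mp hb
      simp only [Finset.mem_filter, Finset.mem_univ, true_and] at he ⊢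
      rw [← hhead e]
      exact he
    have hcard : (univ.filter fun b : (u' : V) × Fin (t u') => b.1 = u).card = t u := by
      have h : (univ.filter fun b : (u' : V) × Fin (t u') => b.1 = u)
          = ({u} : Finset V).sigma fun u' => (univ : Finset (Fin (t u'))) := by
        ext b
        simp [Finset.mem_sigma]
      rw [h, Finset.card_sigma]
      simp
    calc O.indeg u = ((univ.filter fun e => O.head e = u).image f).card :=
          (Finset.card_image_of_injective _ hfinj).symm
      _ ≤ _ := Finset.card_le_card hsub
      _ = t u := hcard
  have hsum_indeg : ∑ u, O.indeg u = Fintype.card E := by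
    have h := Finset.card_eq_sum_card_fiberwise
      (f := O.head) (s := (univ : Finset E)) (t := (univ : Finset V))
      (fun e _ => Finset.mem_univ _)
    rw [Finset.card_univ] at h
    exact h.symm
  have hsum_t : ∑ u, t u = Fintype.card E := by
    have h1 := htsum univ
    rw [if_pos (Finset.mem_univ v)] at h1
    have hEuniv : G.edgesIn univ = univ := by
      ext e
      simp [Multigraph.edgesIn]
    have hgenus : G.genus w = (Fintype.card E : ℤ) - (Fintype.card V : ℤ) + 1
        + ∑ u, (w u : ℤ) := by
      unfold Multigraph.genus Multigraph.genusOf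
      rw [hEuniv, Finset.card_univ, Finset.card_univ]
    rw [hd, hgenus] at h1
    have h2 : ∑ u, (t u : ℤ) = (Fintype.card E : ℤ) := by
      rw [h1, Finset.card_univ]
      ring
    exact_mod_cast h2
  have hindeg : ∀ u, O.indeg u = t u := by
    have heq : ∑ u ∈ univ, O.indeg u = ∑ u ∈ univ, t u := hsum_indeg.trans hsum_t.symm
    intro u
    exact (Finset.sum_eq_sum_iff_of_le (fun u _ => hindeg_le u)).mp heq u (Finset.mem_univ u)
  refine ⟨O, ?_, ?_⟩
  -- d = d_O + v
  · funext u
    simp only [GraphOrientation.multidegree]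
    rw [hindeg u, ht u]
    ring
  -- no directed cut towards a proper subset containing v
  · rintro ⟨S, hSne, hSuniv, hvS, hcut⟩
    set T : Finset V := univ \ S with hT
    have hvT : v ∉ T := by simp [hT, hvS]
    have hTne : T.Nonempty := by
      obtain ⟨x, hx⟩ : ∃ x, x ∉ S := by
        by_contra h
        push_neg at h
        exact hSuniv (Finset.eq_univ_iff_forall.mpr h)
      exact ⟨x, by simp [hT, hx]⟩
    have hTuniv : T ≠ univ := by
      intro h
      rw [h] at hvT
      exact hvT (Finset.mem_univ v)
    have hkey := key T hTne hTuniv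
    have hheads : (univ.filter fun e => O.head e ∈ T) = G.edgesIn T := by
      ext e
      simp only [Finset.mem_filter, Finset.mem_univ, true_and, Multigraph.edgesIn]
      constructor
      · intro h
        rcases hheador e with hh | hh
        · rw [hh] at h
          refine ⟨h, ?_⟩
          by_contra hf
          have hsS : G.snd e ∈ S := by
            simp only [hT, Finset.mem_sdiff, Finset.mem_univ, true_and, not_not] at hf
            exact hf
          have hfS : G.fst e ∉ S := (Finset.mem_sdiff.mp h).2
          have hhS := hcut e (Or.inr ⟨hfS, hsS⟩)
          rw [hh] at hhS
          exact hfS hhS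
        · rw [hh] at h
          refine ⟨?_, h⟩
          by_contra hf
          have hfS : G.fst e ∈ S := by
            simp only [hT, Finset.mem_sdiff, Finset.mem_univ, true_and, not_not] at hf
            exact hf
          have hsS : G.snd e ∉ S := (Finset.mem_sdiff.mp h).2
          have hhS := hcut e (Or.inl ⟨hfS, hsS⟩)
          rw [hh] at hhS
          exact hsS hhS
      · intro h
        rcases hheador e with hh | hh <;> rw [hh]
        · exact h.1
        · exact h.2
    have hfib : ∑ u ∈ T, O.indeg u = (G.edgesIn T).card := by
      rw [← hheads]
      have h := Finset.card_eq_sum_card_fiberwise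
        (f := O.head) (s := univ.filter fun e => O.head e ∈ T) (t := T)
        (fun e he => (Finset.mem_filter.mp he).2)
      rw [h]
      refine Finset.sum_congr rfl fun u hu => ?_
      unfold GraphOrientation.indeg
      congr 1
      rw [Finset.filter_filter]
      ext e
      simp only [Finset.mem_filter, Finset.mem_univ, true_and]
      constructor
      · intro h'
        exact ⟨by rw [h']; exact hu, h'⟩
      · intro h'
        exact h'.2
    have hnat : ∑ u ∈ T, t u = (G.edgesIn T).card := by
      rw [← hfib]
      exact Finset.sum_congr rfl fun u _ => (hindeg u).symm
    have hZ : (∑ u ∈ T, (t u : ℤ)) = ((G.edgesIn T).card : ℤ) := by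
      exact_mod_cast congrArg (Nat.cast (R := ℤ)) hnat
    have h1 := htsum T
    rw [if_neg hvT] at h1
    unfold Multigraph.genusOf at hkey
    linarith
end

section
/- Let G be a stable weighted multigraph of genus g and let d be a multidegree of total degree g on G. Then d is semistable if and only if d − v is semistable for every vertex v ∈ V. -/
open Finset

variable {V E : Type} [Fintype V] [Fintype E] [DecidableEq V] [DecidableEq E]

section Aux

variable (G : Multigraph V E) (w : V → ℕ)

omit [Fintype V] [DecidableEq E] in
lemma aux_handshake (S : Finset V) :
    ∑ v ∈ S, G.valence v = 2 * (G.edgesIn S).card + G.cutCard S := by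
  unfold Multigraph.valence Multigraph.edgesIn Multigraph.cutCard
  simp only [Finset.card_filter, Finset.sum_add_distrib]
  rw [Finset.sum_comm (s := S) (t := (univ : Finset E)),
      Finset.sum_comm (s := S) (t := (univ : Finset E))]
  rw [Finset.mul_sum, ← Finset.sum_add_distrib, ← Finset.sum_add_distrib]
  refine Finset.sum_congr rfl fun e _ => ?_
  rw [Finset.sum_ite_eq S (G.fst e) (fun _ => 1), Finset.sum_ite_eq S (G.snd e) (fun _ => 1)]
  by_cases h1 : G.fst e ∈ S <;> by_cases h2 : G.snd e ∈ S <;>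
    simp [Multigraph.InCut, h1, h2]

omit [Fintype V] [DecidableEq E] in
lemma aux_key (S : Finset V) :
    2 * G.genusOf w S - 2 + (G.cutCard S : ℤ) =
      ∑ v ∈ S, ((G.valence v : ℤ) + 2 * (w v : ℤ) - 2) := by
  have h := aux_handshake G S
  have h' : (∑ v ∈ S, (G.valence v : ℤ)) = 2 * (G.edgesIn S).card + G.cutCard S := by
    exact_mod_cast congrArg (Nat.cast : ℕ → ℤ) h
  unfold Multigraph.genusOf
  rw [Finset.sum_sub_distrib, Finset.sum_add_distrib, h']
  simp [Finset.mul_sum]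
  rw [← Finset.mul_sum]
  ring

omit [DecidableEq E] in
lemma aux_valence_pos (hG : G.IsStable w) (v : V) (hv : w v = 1) :
    1 ≤ G.valence v := by
  have hedge : (∃ e : E, G.fst e = v ∨ G.snd e = v) → 1 ≤ G.valence v := by
    rintro ⟨e, he | he⟩
    · have : e ∈ univ.filter (fun e => G.fst e = v) := by simp [he]
      have := Finset.card_pos.2 ⟨e, this⟩
      unfold Multigraph.valence; omega
    · have : e ∈ univ.filter (fun e => G.snd e = v) := by simp [he]
      have := Finset.card_pos.2 ⟨e, this⟩
      unfold Multigraph.valence; omega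
  by_cases hall : ∀ u : V, u = v
  · -- single vertex: genus ≥ 2 forces an edge
    have huniv : (univ : Finset V) = {v} := by
      ext u; simp [hall u]
    have hE : G.edgesIn univ = univ := by
      unfold Multigraph.edgesIn; simp
    have hg : G.genus w = (Fintype.card E : ℤ) + 1 := by
      unfold Multigraph.genus Multigraph.genusOf
      rw [hE, huniv]
      simp [hv]
    have h2 := hG.2.1
    rw [hg] at h2
    have : 0 < Fintype.card E := by exact_mod_cast (by linarith : (0:ℤ) < Fintype.card E)
    obtain ⟨e⟩ := Fintype.card_pos_iff.mp this
    exact hedge ⟨e, Or.inl (hall _)⟩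
  · push_neg at hall
    obtain ⟨u, hu⟩ := hall
    have hconn := hG.1.2 v u
    rcases hconn.cases_head with h | ⟨c, ⟨e, he⟩, _⟩
    · exact absurd h.symm hu
    · rcases he with ⟨h1, _⟩ | ⟨_, h2⟩
      · exact hedge ⟨e, Or.inl h1⟩
      · exact hedge ⟨e, Or.inr h2⟩

omit [DecidableEq E] in
lemma aux_term_ge (hG : G.IsStable w) (v : V) :
    (1 : ℤ) ≤ (G.valence v : ℤ) + 2 * (w v : ℤ) - 2 := by
  rcases Nat.lt_or_ge (w v) 1 with h | h
  · have h0 : w v = 0 := by omega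
    have := hG.2.2 v h0
    have : (3 : ℤ) ≤ G.valence v := by exact_mod_cast this
    simp [h0]; linarith
  · rcases Nat.lt_or_ge (w v) 2 with h2 | h2
    · have h1 : w v = 1 := by omega
      have := aux_valence_pos G w hG v h1
      have : (1 : ℤ) ≤ G.valence v := by exact_mod_cast this
      rw [h1]; push_cast; linarith
    · have : (2 : ℤ) ≤ w v := by exact_mod_cast h2
      have : (0 : ℤ) ≤ G.valence v := by positivity
      linarith

omit [DecidableEq E] in
lemma aux_cutCard_univ : G.cutCard univ = 0 := by
  unfold Multigraph.cutCard
  simp [Multigraph.InCut]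

end Aux

/-- A multidegree of total degree `g` on a stable weighted multigraph
is semistable iff `d - v` is semistable for every vertex `v`. -/
theorem semistable_degree_g_iff_sub_vertex
    (G : Multigraph V E) (w : V → ℕ) (hG : G.IsStable w) (d : V → ℤ)
    (hd : ∑ v, d v = G.genus w) :
    G.Semistable w d ↔
      ∀ v : V, G.Semistable w (fun u => d u - if u = v then 1 else 0) := by
  set m : Finset V → ℤ := fun S => ∑ v ∈ S, ((G.valence v : ℤ) + 2 * (w v : ℤ) - 2) with hm
  have hkey : ∀ S : Finset V, 2 * G.genusOf w S - 2 + (G.cutCard S : ℤ) = m S :=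
    fun S => aux_key G w S
  have hm1 : ∀ S : Finset V, S.Nonempty → 1 ≤ m S := by
    intro S hS
    obtain ⟨v, hv⟩ := hS
    calc (1 : ℤ) ≤ ∑ _v ∈ S, 1 := by
          simpa using (Finset.card_pos.2 ⟨v, hv⟩ : 0 < S.card)
      _ ≤ m S := Finset.sum_le_sum fun i _ => aux_term_ge G w hG i
  have hmuniv : m univ = 2 * G.genus w - 2 := by
    have := hkey univ
    rw [aux_cutCard_univ] at this
    unfold Multigraph.genus
    push_cast at this
    linarith
  have hmono : ∀ S : Finset V, m S ≤ 2 * G.genus w - 2 := by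
    intro S
    rw [← hmuniv]
    exact Finset.sum_le_sum_of_subset_of_nonneg (Finset.subset_univ S)
      (fun i _ _ => by linarith [aux_term_ge G w hG i])
  have hA : (2 : ℤ) ≤ 2 * G.genus w - 2 := by linarith [hG.2.1]
  constructor
  · intro h v S hS
    have hsum' : (∑ u : V, (d u - if u = v then 1 else 0)) = G.genus w - 1 := by
      rw [Finset.sum_sub_distrib, hd, Finset.sum_ite_eq' univ v (fun _ => (1:ℤ))]
      simp
    have hSsum : (∑ u ∈ S, (d u - if u = v then 1 else 0)) =
        (∑ u ∈ S, d u) - (if v ∈ S then 1 else 0) := by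
      rw [Finset.sum_sub_distrib, Finset.sum_ite_eq' S v (fun _ => (1:ℤ))]
    rw [hsum', hSsum]
    have hz : G.genus w - 1 - G.genus w + 1 = 0 := by ring
    rw [hz, zero_mul, add_zero]
    have H := h S hS
    rw [hd, hkey S] at H
    have h1 : G.genus w - G.genus w + 1 = 1 := by ring
    rw [h1, one_mul] at H
    have hmS := hm1 S hS
    have hdB : G.genusOf w S ≤ ∑ u ∈ S, d u := by
      by_contra hc
      push_neg at hc
      have : (2 * G.genus w - 2) * (∑ u ∈ S, d u) ≤
          (2 * G.genus w - 2) * (G.genusOf w S - 1) :=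
        mul_le_mul_of_nonneg_left (by linarith) (by linarith)
      linarith
    have he0 : (0 : ℤ) ≤ (if v ∈ S then 1 else 0) := by split <;> norm_num
    have he1 : (if v ∈ S then (1:ℤ) else 0) ≤ 1 := by split <;> norm_num
    have : G.genusOf w S - 1 ≤ (∑ u ∈ S, d u) - (if v ∈ S then 1 else 0) := by linarith
    exact mul_le_mul_of_nonneg_left this (by linarith)
  · intro h S hS
    obtain ⟨v, hv⟩ := hS
    have H := h v S ⟨v, hv⟩
    have hsum' : (∑ u : V, (d u - if u = v then 1 else 0)) = G.genus w - 1 := by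
      rw [Finset.sum_sub_distrib, hd, Finset.sum_ite_eq' univ v (fun _ => (1:ℤ))]
      simp
    have hSsum : (∑ u ∈ S, (d u - if u = v then 1 else 0)) =
        (∑ u ∈ S, d u) - 1 := by
      rw [Finset.sum_sub_distrib, Finset.sum_ite_eq' S v (fun _ => (1:ℤ)), if_pos hv]
    rw [hsum', hSsum] at H
    have hz : G.genus w - 1 - G.genus w + 1 = 0 := by ring
    rw [hz, zero_mul, add_zero] at H
    rw [hd, hkey S]
    have h1 : G.genus w - G.genus w + 1 = 1 := by ring
    rw [h1, one_mul]
    have := hmono S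
    nlinarith
end

section
/- Let G be a stable weighted multigraph of genus g and let d be a multidegree of total degree δ > g such that Σ_{v∈S} d_v ≥ g(S) for every nonempty subset S ⊆ V. Then there exists a vertex v ∈ V such that for every subset S ⊆ V with v ∈ S, the strict inequality Σ_{w∈S} d_w > g(S) holds. -/
open Finset

variable {V E : Type} [Fintype V] [Fintype E] [DecidableEq V] [DecidableEq E]

section Aux

variable {G : Multigraph V E}

lemma mem_edgesIn_aux {S : Finset V} {e : E} :
    e ∈ G.edgesIn S ↔ G.fst e ∈ S ∧ G.snd e ∈ S := by
  simp [Multigraph.edgesIn]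

lemma edgesIn_supermodular (G : Multigraph V E) (S T : Finset V) :
    (G.edgesIn S).card + (G.edgesIn T).card ≤
      (G.edgesIn (S ∪ T)).card + (G.edgesIn (S ∩ T)).card := by
  have h1 : G.edgesIn S ∪ G.edgesIn T ⊆ G.edgesIn (S ∪ T) := by
    intro e he
    rcases Finset.mem_union.1 he with hh | hh <;>
      rw [mem_edgesIn_aux] at hh ⊢ <;>
      simp [Finset.mem_union, hh.1, hh.2]
  have h2 : G.edgesIn S ∩ G.edgesIn T = G.edgesIn (S ∩ T) := by
    ext e
    simp only [Finset.mem_inter, mem_edgesIn_aux]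
    tauto
  calc (G.edgesIn S).card + (G.edgesIn T).card
      = (G.edgesIn S ∪ G.edgesIn T).card + (G.edgesIn S ∩ G.edgesIn T).card :=
        (Finset.card_union_add_card_inter _ _).symm
    _ ≤ (G.edgesIn (S ∪ T)).card + (G.edgesIn (S ∩ T)).card := by
        rw [h2]
        exact Nat.add_le_add_right (Finset.card_le_card h1) _

lemma edgesIn_union_disjoint (G : Multigraph V E) {S T : Finset V}
    (hdisj : Disjoint S T) {e : E}
    (he : (G.fst e ∈ S ∧ G.snd e ∈ T) ∨ (G.fst e ∈ T ∧ G.snd e ∈ S)) :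
    (G.edgesIn S).card + (G.edgesIn T).card + 1 ≤ (G.edgesIn (S ∪ T)).card := by
  have hAB : Disjoint (G.edgesIn S) (G.edgesIn T) := by
    rw [Finset.disjoint_left]
    intro a haS haT
    rw [mem_edgesIn_aux] at haS haT
    exact (Finset.disjoint_left.1 hdisj) haS.1 haT.1
  have heU : e ∉ G.edgesIn S ∪ G.edgesIn T := by
    intro hmem
    rcases Finset.mem_union.1 hmem with hh | hh <;> rw [mem_edgesIn_aux] at hh
    · rcases he with ⟨h1, h2⟩ | ⟨h1, h2⟩
      · exact (Finset.disjoint_left.1 hdisj) hh.2 h2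
      · exact (Finset.disjoint_left.1 hdisj) hh.1 h1
    · rcases he with ⟨h1, h2⟩ | ⟨h1, h2⟩
      · exact (Finset.disjoint_left.1 hdisj) h1 hh.1
      · exact (Finset.disjoint_left.1 hdisj) h2 hh.2
  have hsub : insert e (G.edgesIn S ∪ G.edgesIn T) ⊆ G.edgesIn (S ∪ T) := by
    intro a ha
    rcases Finset.mem_insert.1 ha with rfl | ha
    · rw [mem_edgesIn_aux]
      rcases he with ⟨h1, h2⟩ | ⟨h1, h2⟩
      · exact ⟨Finset.mem_union_left _ h1, Finset.mem_union_right _ h2⟩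
      · exact ⟨Finset.mem_union_right _ h1, Finset.mem_union_left _ h2⟩
    · rcases Finset.mem_union.1 ha with hh | hh <;> rw [mem_edgesIn_aux] at hh <;>
        rw [mem_edgesIn_aux] <;> simp [Finset.mem_union, hh.1, hh.2]
  calc (G.edgesIn S).card + (G.edgesIn T).card + 1
      = (insert e (G.edgesIn S ∪ G.edgesIn T)).card := by
        rw [Finset.card_insert_of_notMem heU, Finset.card_union_of_disjoint hAB]
    _ ≤ (G.edgesIn (S ∪ T)).card := Finset.card_le_card hsub

lemma cut_of_path {U : Finset V} {a b : V}
    (hab : Relation.ReflTransGen G.Adj a b) (ha : a ∈ U) (hb : b ∉ U) :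
    ∃ e, G.InCut U e := by
  induction hab with
  | refl => exact absurd ha hb
  | tail _ hadj ih =>
    rename_i c b' _
    by_cases hc : c ∈ U
    · obtain ⟨e, he⟩ := hadj
      rcases he with ⟨h1, h2⟩ | ⟨h1, h2⟩
      · exact ⟨e, Or.inl ⟨h1 ▸ hc, h2 ▸ hb⟩⟩
      · exact ⟨e, Or.inr ⟨h1 ▸ hb, h2 ▸ hc⟩⟩
    · exact ih hc

lemma exists_cut_edge (G : Multigraph V E) (hconn : G.Connected) {U : Finset V}
    (hne : U.Nonempty) (hproper : U ≠ univ) : ∃ e, G.InCut U e := by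
  obtain ⟨a, ha⟩ := hne
  have : ∃ b, b ∉ U := by
    by_contra hcon
    push_neg at hcon
    exact hproper (Finset.eq_univ_iff_forall.2 hcon)
  obtain ⟨b, hb⟩ := this
  exact cut_of_path (hconn.2 a b) ha hb

end Aux

/-- If `d` has total degree `δ > g` on a stable weighted multigraph and
`Σ_{v ∈ S} d_v ≥ g(S)` for every nonempty `S`, then there is a vertex `v` such that
`Σ_{w ∈ S} d_w > g(S)` for every `S` containing `v`. -/
theorem exists_vertex_strict_inequality
    (G : Multigraph V E) (w : V → ℕ) (hG : G.IsStable w) (d : V → ℤ)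
    (hδ : G.genus w < ∑ v, d v)
    (h : ∀ S : Finset V, S.Nonempty → G.genusOf w S ≤ ∑ v ∈ S, d v) :
    ∃ v : V, ∀ S : Finset V, v ∈ S → G.genusOf w S < ∑ u ∈ S, d u := by
  classical
  by_contra hcon
  push_neg at hcon
  -- hcon : ∀ v, ∃ S, v ∈ S ∧ ∑ u ∈ S, d u ≤ G.genusOf w S
  -- every such S is an "equality set": ∑ = genus
  have heq : ∀ v : V, ∃ S : Finset V, v ∈ S ∧ ∑ u ∈ S, d u = G.genusOf w S := by
    intro v
    obtain ⟨S, hvS, hS⟩ := hcon v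
    exact ⟨S, hvS, le_antisymm hS (h S ⟨v, hvS⟩)⟩
  -- the family of equality sets
  set T : Finset (Finset V) :=
    univ.filter (fun S => S.Nonempty ∧ ∑ u ∈ S, d u = G.genusOf w S) with hT
  have hTmem : ∀ S : Finset V, S ∈ T ↔ S.Nonempty ∧ ∑ u ∈ S, d u = G.genusOf w S := by
    intro S; simp [hT]
  obtain ⟨v0⟩ := hG.1.1
  obtain ⟨S0, hv0S0, hS0⟩ := heq v0
  have hTne : T.Nonempty := ⟨S0, (hTmem S0).2 ⟨⟨v0, hv0S0⟩, hS0⟩⟩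
  obtain ⟨U, hUT, hUmax⟩ := Finset.exists_max_image T Finset.card hTne
  obtain ⟨hUne, hUeq⟩ := (hTmem U).1 hUT
  have hUproper : U ≠ univ := by
    intro hu
    rw [hu] at hUeq
    rw [Multigraph.genus, ← hUeq] at hδ
    exact absurd hδ (lt_irrefl _)
  -- find a cut edge of U
  obtain ⟨e, hcut⟩ := exists_cut_edge G hG.1 hUne hUproper
  -- extract the endpoint x outside U
  obtain ⟨x, hxU, hx⟩ :
      ∃ x : V, x ∉ U ∧ ((G.fst e ∈ U ∧ G.snd e = x) ∨ (G.fst e = x ∧ G.snd e ∈ U)) := by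
    rcases hcut with ⟨h1, h2⟩ | ⟨h1, h2⟩
    · exact ⟨G.snd e, h2, Or.inl ⟨h1, rfl⟩⟩
    · exact ⟨G.fst e, h1, Or.inr ⟨rfl, h2⟩⟩
  obtain ⟨S, hxS, hSeq⟩ := heq x
  -- key claim: U ∪ S is also an equality set
  have hUSne : (U ∪ S).Nonempty := hUne.mono Finset.subset_union_left
  have hkey : ∑ u ∈ U ∪ S, d u ≤ G.genusOf w (U ∪ S) := by
    have hdsum : ∑ u ∈ U ∪ S, d u + ∑ u ∈ U ∩ S, d u = ∑ u ∈ U, d u + ∑ u ∈ S, d u :=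
      Finset.sum_union_inter
    have hwsum : ∑ v ∈ U ∪ S, (w v : ℤ) + ∑ v ∈ U ∩ S, (w v : ℤ)
        = ∑ v ∈ U, (w v : ℤ) + ∑ v ∈ S, (w v : ℤ) := Finset.sum_union_inter
    have hcard : ((U ∪ S).card : ℤ) + ((U ∩ S).card : ℤ) = (U.card : ℤ) + (S.card : ℤ) := by
      exact_mod_cast Finset.card_union_add_card_inter U S
    by_cases hint : (U ∩ S).Nonempty
    · -- intersecting case: supermodularity
      have e1 : ((G.edgesIn U).card : ℤ) + ((G.edgesIn S).card : ℤ) ≤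
          ((G.edgesIn (U ∪ S)).card : ℤ) + ((G.edgesIn (U ∩ S)).card : ℤ) := by
        exact_mod_cast edgesIn_supermodular G U S
      have hInt := h (U ∩ S) hint
      simp only [Multigraph.genusOf] at hUeq hSeq hInt ⊢
      linarith
    · -- disjoint case: use the cut edge
      have hintemp : U ∩ S = ∅ := Finset.not_nonempty_iff_eq_empty.1 hint
      have hdisj : Disjoint U S := Finset.disjoint_iff_inter_eq_empty.2 hintemp
      have he : (G.fst e ∈ U ∧ G.snd e ∈ S) ∨ (G.fst e ∈ S ∧ G.snd e ∈ U) := by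
        rcases hx with ⟨h1, h2⟩ | ⟨h1, h2⟩
        · exact Or.inl ⟨h1, h2 ▸ hxS⟩
        · exact Or.inr ⟨h1 ▸ hxS, h2⟩
      have e2 : ((G.edgesIn U).card : ℤ) + ((G.edgesIn S).card : ℤ) + 1 ≤
          ((G.edgesIn (U ∪ S)).card : ℤ) := by
        exact_mod_cast edgesIn_union_disjoint G hdisj he
      have hcard2 : ((U ∩ S).card : ℤ) = 0 := by rw [hintemp]; simp
      have hdsum2 : ∑ u ∈ U ∩ S, d u = 0 := by rw [hintemp]; simp
      have hwsum2 : ∑ v ∈ U ∩ S, (w v : ℤ) = 0 := by rw [hintemp]; simp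
      simp only [Multigraph.genusOf] at hUeq hSeq ⊢
      linarith
  have hUSeq : ∑ u ∈ U ∪ S, d u = G.genusOf w (U ∪ S) :=
    le_antisymm hkey (h (U ∪ S) hUSne)
  have hUST : U ∪ S ∈ T := (hTmem _).2 ⟨hUSne, hUSeq⟩
  have hlt : U.card < (U ∪ S).card := by
    apply Finset.card_lt_card
    exact ⟨Finset.subset_union_left, fun hsub => hxU (hsub (Finset.mem_union_right _ hxS))⟩
  exact absurd (hUmax _ hUST) (not_le.2 hlt)
end

section
/- Let G be a stable weighted multigraph and let d be a multidegree on G such that Σ_{v∈S} d_v ≥ g(S) for every nonempty subset S ⊆ V. If T ⊆ V is a nonempty subset with Σ_{v∈T} d_v = g(T), then the induced subgraph of G on T is connected. -/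
open Finset

variable {V E : Type} [Fintype V] [Fintype E] [DecidableEq V] [DecidableEq E]

/-- If `Σ_{v ∈ S} d_v ≥ g(S)` for all nonempty `S` on a stable weighted
multigraph, and `T` is nonempty with `Σ_{v ∈ T} d_v = g(T)`, then the induced
subgraph on `T` is connected. -/
theorem equality_subset_connected
    (G : Multigraph V E) (w : V → ℕ) (hG : G.IsStable w) (d : V → ℤ)
    (h : ∀ S : Finset V, S.Nonempty → G.genusOf w S ≤ ∑ v ∈ S, d v)
    (T : Finset V) (hT : T.Nonempty) (hTd : ∑ v ∈ T, d v = G.genusOf w T) :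
    G.ConnectedOn T := by
  classical
  by_contra hcon
  simp only [Multigraph.ConnectedOn, not_forall] at hcon
  obtain ⟨a, ha, b, hb, hab⟩ := hcon
  set A := T.filter (fun x => Relation.ReflTransGen (G.AdjOn T) a x) with hAdef
  have haA : a ∈ A := Finset.mem_filter.2 ⟨ha, Relation.ReflTransGen.refl⟩
  have hAsub : A ⊆ T := Finset.filter_subset _ _
  set B := T \ A with hBdef
  have hbB : b ∈ B := by simp [hBdef, hAdef, hb, hab]
  have hBsub : B ⊆ T := Finset.sdiff_subset
  have hdisj : Disjoint A B := Finset.disjoint_sdiff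
  have hunion : A ∪ B = T := Finset.union_sdiff_of_subset hAsub
  have hclosed : ∀ x ∈ A, ∀ y ∈ T, G.AdjOn T x y → y ∈ A := by
    intro x hx y hy hadj
    simp only [hAdef, Finset.mem_filter] at hx ⊢
    exact ⟨hy, hx.2.tail hadj⟩
  have hedge : G.edgesIn T = G.edgesIn A ∪ G.edgesIn B := by
    ext e
    simp only [Multigraph.edgesIn, Finset.mem_filter, Finset.mem_union, Finset.mem_univ,
      true_and]
    constructor
    · rintro ⟨h1, h2⟩
      by_cases hf : G.fst e ∈ A
      · exact Or.inl ⟨hf, hclosed _ hf _ h2 ⟨e, Or.inl ⟨rfl, rfl⟩, h1, h2⟩⟩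
      · by_cases hs : G.snd e ∈ A
        · exact absurd (hclosed _ hs _ h1 ⟨e, Or.inr ⟨rfl, rfl⟩, h1, h2⟩) hf
        · exact Or.inr ⟨Finset.mem_sdiff.2 ⟨h1, hf⟩, Finset.mem_sdiff.2 ⟨h2, hs⟩⟩
    · rintro (⟨h1, h2⟩ | ⟨h1, h2⟩)
      exacts [⟨hAsub h1, hAsub h2⟩, ⟨hBsub h1, hBsub h2⟩]
  have hedisj : Disjoint (G.edgesIn A) (G.edgesIn B) := by
    rw [Finset.disjoint_left]
    intro e h1 h2
    simp only [Multigraph.edgesIn, Finset.mem_filter] at h1 h2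
    exact (Finset.disjoint_left.1 hdisj h1.2.1) h2.2.1
  have hcard : (G.edgesIn T).card = (G.edgesIn A).card + (G.edgesIn B).card := by
    rw [hedge, Finset.card_union_of_disjoint hedisj]
  have hcardV : T.card = A.card + B.card := by
    rw [← hunion, Finset.card_union_of_disjoint hdisj]
  have hsum : ∀ f : V → ℤ, ∑ v ∈ T, f v = ∑ v ∈ A, f v + ∑ v ∈ B, f v := by
    intro f; rw [← hunion, Finset.sum_union hdisj]
  have hA := h A ⟨a, haA⟩
  have hB := h B ⟨b, hbB⟩
  have hgen : G.genusOf w T = G.genusOf w A + G.genusOf w B - 1 := by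
    simp only [Multigraph.genusOf, hcard, hcardV, hsum (fun v => (w v : ℤ))]
    push_cast
    ring
  have hds := hsum d
  linarith
end
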